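/- Let 0 < ε < 1, κ = (ε²−1)/ε² (so κ < 0), p ∈ ℝⁿ, and set q = √(1 + |κ|(1 + |p|²)). Then for any η ∈ ℝⁿ, one has −(κ/q)(|η|² + κ (p·η)²/q²) ≥ (|κ|(1+|κ|)/q³)|η|². -/

import Mathlib

/-- For `0 < ε < 1`, `κ = (ε² - 1)/ε² < 0`, `q = √(1 + |κ|(1 + ‖p‖²))`, and any `η`,
`-(κ/q)(‖η‖² + κ ⟨p,η⟩²/q²) ≥ (|κ|(1 + |κ|)/q³) ‖η‖²`. -/
theorem stmt_4 (n : ℕ) (ε κ : ℝ) (hε : 0 < ε) (hε1 : ε < 1)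
    (hκ : κ = (ε ^ 2 - 1) / ε ^ 2)
    (p η : EuclideanSpace ℝ (Fin n)) (q : ℝ)
    (hq : q = Real.sqrt (1 + |κ| * (1 + ‖p‖ ^ 2))) :
    |κ| * (1 + |κ|) / q ^ 3 * ‖η‖ ^ 2 ≤
      -(κ / q) * (‖η‖ ^ 2 + κ * (inner ℝ p η : ℝ) ^ 2 / q ^ 2) := by
  have hκneg : κ < 0 := by
    rw [hκ]
    apply div_neg_of_neg_of_pos <;> nlinarith
  have habs : |κ| = -κ := abs_of_neg hκneg
  have hq2 : q ^ 2 = 1 + |κ| * (1 + ‖p‖ ^ 2) := by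
    rw [hq, Real.sq_sqrt]; positivity
  have hqpos : 0 < q := by
    rw [hq]; apply Real.sqrt_pos.mpr; positivity
  have hCS : (inner ℝ p η : ℝ) ^ 2 ≤ ‖p‖ ^ 2 * ‖η‖ ^ 2 := by
    have h := abs_real_inner_le_norm p η
    nlinarith [abs_nonneg (inner ℝ p η : ℝ), sq_abs (inner ℝ p η : ℝ),
      norm_nonneg p, norm_nonneg η]
  rw [habs] at *
  have hq3 : q ^ 3 = q * q ^ 2 := by ring
  rw [div_mul_eq_mul_div, div_le_iff₀ (by positivity)]
  have hη : (0:ℝ) ≤ ‖η‖ ^ 2 := sq_nonneg _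
  have hp : (0:ℝ) ≤ ‖p‖ ^ 2 := sq_nonneg _
  have key : -κ * (1 + -κ) * ‖η‖ ^ 2 ≤
      -κ * (q ^ 2 * ‖η‖ ^ 2 + κ * (inner ℝ p η : ℝ) ^ 2) := by
    have h2 : 0 ≤ κ ^ 2 * (‖p‖ ^ 2 * ‖η‖ ^ 2 - (inner ℝ p η : ℝ) ^ 2) :=
      mul_nonneg (sq_nonneg κ) (by linarith)
    have h3 : -κ * (q ^ 2 * ‖η‖ ^ 2 + κ * (inner ℝ p η : ℝ) ^ 2) -
        -κ * (1 + -κ) * ‖η‖ ^ 2 =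
        κ ^ 2 * (‖p‖ ^ 2 * ‖η‖ ^ 2 - (inner ℝ p η : ℝ) ^ 2) := by
      rw [hq2]; ring
    linarith
  calc -κ * (1 + -κ) * ‖η‖ ^ 2
      ≤ -κ * (q ^ 2 * ‖η‖ ^ 2 + κ * (inner ℝ p η : ℝ) ^ 2) := key
    _ = -(κ / q) * (‖η‖ ^ 2 + κ * (inner ℝ p η : ℝ) ^ 2 / q ^ 2) * q ^ 3 := by
        field_simp
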